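/- arXiv:1210.6792 — 3 statements merged into one kernel-verified Lean document; each statement's English description precedes it below -/
import Mathlib

section
/- Let r > 0 and τ₀ > 0, and let f : [0,r] × [0,τ₀] → ℝ be a nonnegative bounded function. Suppose there are nonnegative constants A, B, α, β, σ₃ with 0 ≤ σ₃ < 1 such that for every 0 < r₁ < r₂ < r and every 0 < τ₂ < τ₁ < τ₀ one has f(r₁,τ₁) ≤ σ₃·f(r₂,τ₂) + A·(r₂−r₁)^(−α) + B·(τ₁−τ₂)^(−β). Then there exists a constant C, depending only on α, β and σ₃, such that for every 0 < r₁ < r₂ < r and every 0 < τ₂ < τ₁ < τ₀ one has f(r₁,τ₁) ≤ C·A·(r₂−r₁)^(−α) + C·B·(τ₁−τ₂)^(−β). -/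
open Real Filter

/-- Auxiliary lemma: the iteration argument when both coefficients are positive. -/
lemma two_parameter_iteration_aux
    (α β σ₃ : ℝ) (hα : 0 ≤ α) (hβ : 0 ≤ β) (hσ0 : 0 ≤ σ₃)
    (l : ℝ) (hl0 : 0 < l) (hl1 : l < 1)
    (C : ℝ) (hC0 : 0 ≤ C)
    (hq0 : 0 ≤ σ₃ * l ^ (-(max α β))) (hq1 : σ₃ * l ^ (-(max α β)) < 1)
    (hfix : σ₃ * l ^ (-(max α β)) * C + (1 - l) ^ (-(max α β)) = C)
    (r τ₀ : ℝ) (f : ℝ → ℝ → ℝ) (A B : ℝ)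
    (hr : 0 < r) (hτ₀ : 0 < τ₀) (hA : 0 < A) (hB : 0 < B)
    (M : ℝ) (hM : ∀ ρ ∈ Set.Icc (0 : ℝ) r, ∀ τ ∈ Set.Icc (0 : ℝ) τ₀, f ρ τ ≤ M)
    (hiter : ∀ r₁ r₂ τ₁ τ₂ : ℝ, 0 < r₁ → r₁ < r₂ → r₂ < r → 0 < τ₂ → τ₂ < τ₁ → τ₁ < τ₀ →
        f r₁ τ₁ ≤ σ₃ * f r₂ τ₂ + A * (r₂ - r₁) ^ (-α) + B * (τ₁ - τ₂) ^ (-β)) :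
    ∀ r₁ r₂ τ₁ τ₂ : ℝ, 0 < r₁ → r₁ < r₂ → r₂ < r → 0 < τ₂ → τ₂ < τ₁ → τ₁ < τ₀ →
        f r₁ τ₁ ≤ C * A * (r₂ - r₁) ^ (-α) + C * B * (τ₁ - τ₂) ^ (-β) := by
  set γ := max α β with hγdef
  have hαγ : α ≤ γ := le_max_left _ _
  have hβγ : β ≤ γ := le_max_right _ _
  set q := σ₃ * l ^ (-γ) with hqdef
  set c₀ := (1 - l) ^ (-γ) with hc₀def
  have hl1' : 0 < 1 - l := by linarith
  have hc₀pos : 0 < c₀ := Real.rpow_pos_of_pos hl1' _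
  -- the family of bounds
  set Bnd : ℝ → Prop := fun K => ∀ r₁ r₂ τ₁ τ₂ : ℝ,
      0 < r₁ → r₁ < r₂ → r₂ < r → 0 < τ₂ → τ₂ < τ₁ → τ₁ < τ₀ →
      f r₁ τ₁ ≤ K * (A * (r₂ - r₁) ^ (-α) + B * (τ₁ - τ₂) ^ (-β)) with hBnddef
  -- positivity of the "scale" quantity
  have hSpos : ∀ r₁ r₂ τ₁ τ₂ : ℝ, r₁ < r₂ → τ₂ < τ₁ →
      0 < A * (r₂ - r₁) ^ (-α) + B * (τ₁ - τ₂) ^ (-β) := by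
    intro r₁ r₂ τ₁ τ₂ h1 h2
    have := Real.rpow_pos_of_pos (by linarith : (0:ℝ) < r₂ - r₁) (-α)
    have := Real.rpow_pos_of_pos (by linarith : (0:ℝ) < τ₁ - τ₂) (-β)
    positivity
  -- monotonicity of Bnd
  have hmono : ∀ K K' : ℝ, K ≤ K' → Bnd K → Bnd K' := by
    intro K K' hKK' hBK r₁ r₂ τ₁ τ₂ h1 h2 h3 h4 h5 h6
    refine (hBK r₁ r₂ τ₁ τ₂ h1 h2 h3 h4 h5 h6).trans ?_
    exact mul_le_mul_of_nonneg_right hKK' (hSpos r₁ r₂ τ₁ τ₂ h2 h5).le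
  -- base bound from boundedness of f
  set K₀ : ℝ := max M 0 / (A * r ^ (-α)) with hK₀def
  have hrpos : 0 < A * r ^ (-α) := mul_pos hA (Real.rpow_pos_of_pos hr _)
  have hK₀nn : 0 ≤ K₀ := div_nonneg (le_max_right _ _) hrpos.le
  have hbase : Bnd K₀ := by
    intro r₁ r₂ τ₁ τ₂ h1 h2 h3 h4 h5 h6
    have hfM : f r₁ τ₁ ≤ max M 0 :=
      (hM r₁ ⟨h1.le, by linarith⟩ τ₁ ⟨by linarith, h6.le⟩).trans (le_max_left _ _)
    have hd : r ^ (-α) ≤ (r₂ - r₁) ^ (-α) :=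
      Real.rpow_le_rpow_of_nonpos (by linarith) (by linarith) (by linarith)
    have h1' : max M 0 ≤ K₀ * (A * (r₂ - r₁) ^ (-α)) := by
      rw [hK₀def, div_mul_eq_mul_div, le_div_iff₀ hrpos]
      have hM0 : 0 ≤ max M 0 := le_max_right _ _
      exact mul_le_mul_of_nonneg_left (mul_le_mul_of_nonneg_left hd hA.le) hM0
    have hBe : 0 ≤ B * (τ₁ - τ₂) ^ (-β) :=
      mul_nonneg hB.le (Real.rpow_nonneg (by linarith) _)
    have hK₀Be : 0 ≤ K₀ * (B * (τ₁ - τ₂) ^ (-β)) := mul_nonneg hK₀nn hBe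
    calc f r₁ τ₁ ≤ max M 0 := hfM
      _ ≤ K₀ * (A * (r₂ - r₁) ^ (-α)) := h1'
      _ ≤ K₀ * (A * (r₂ - r₁) ^ (-α) + B * (τ₁ - τ₂) ^ (-β)) := by
          rw [mul_add]; linarith
  -- one improvement step
  have hstep : ∀ K : ℝ, 0 ≤ K → Bnd K → Bnd (q * K + c₀) := by
    intro K hK hBK r₁ r₂ τ₁ τ₂ h1 h2 h3 h4 h5 h6
    have hd : 0 < r₂ - r₁ := by linarith
    have he : 0 < τ₁ - τ₂ := by linarith
    set d := r₂ - r₁ with hddef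
    set e := τ₁ - τ₂ with hedef
    have hP1 : 0 < (1 - l) * d := mul_pos hl1' hd
    have hP2 : 0 < l * d := mul_pos hl0 hd
    have hP3 : 0 < (1 - l) * e := mul_pos hl1' he
    have hP4 : 0 < l * e := mul_pos hl0 he
    have hsumd : (1 - l) * d + l * d = d := by ring
    have hsume : (1 - l) * e + l * e = e := by ring
    set ρ := r₁ + (1 - l) * d with hρdef
    set τ := τ₁ - (1 - l) * e with hτdef
    have hρ1 : r₁ < ρ := by rw [hρdef]; linarith
    have hρ2 : ρ < r₂ := by
      rw [hρdef]
      have : r₂ = r₁ + d := by rw [hddef]; ring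
      rw [this]; linarith
    have hτ1 : τ₂ < τ := by
      rw [hτdef]
      have : τ₂ = τ₁ - e := by rw [hedef]; ring
      rw [this]; linarith
    have hτ2 : τ < τ₁ := by rw [hτdef]; linarith
    have key1 := hiter r₁ ρ τ₁ τ h1 hρ1 (hρ2.trans h3) (by linarith) hτ2 (by linarith)
    have key2 := hBK ρ r₂ τ τ₂ (by linarith) hρ2 h3 h4 hτ1 (by linarith)
    have eρ : ρ - r₁ = (1 - l) * d := by rw [hρdef]; ring
    have eτ : τ₁ - τ = (1 - l) * e := by rw [hτdef]; ring
    have eρ2 : r₂ - ρ = l * d := by rw [hρdef, hddef]; ring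
    have eτ2 : τ - τ₂ = l * e := by rw [hτdef, hedef]; ring
    rw [eρ, eτ] at key1
    rw [eρ2, eτ2] at key2
    rw [Real.mul_rpow hl1'.le hd.le, Real.mul_rpow hl1'.le he.le] at key1
    rw [Real.mul_rpow hl0.le hd.le, Real.mul_rpow hl0.le he.le] at key2
    have hlα : l ^ (-α) ≤ l ^ (-γ) :=
      Real.rpow_le_rpow_of_exponent_ge hl0 hl1.le (by linarith)
    have hlβ : l ^ (-β) ≤ l ^ (-γ) :=
      Real.rpow_le_rpow_of_exponent_ge hl0 hl1.le (by linarith)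
    have h1α : (1 - l) ^ (-α) ≤ c₀ :=
      Real.rpow_le_rpow_of_exponent_ge hl1' (by linarith) (by linarith)
    have h1β : (1 - l) ^ (-β) ≤ c₀ :=
      Real.rpow_le_rpow_of_exponent_ge hl1' (by linarith) (by linarith)
    have hdα : 0 < d ^ (-α) := Real.rpow_pos_of_pos hd _
    have heβ : 0 < e ^ (-β) := Real.rpow_pos_of_pos he _
    have hσK : 0 ≤ σ₃ * K := mul_nonneg hσ0 hK
    have hAd : 0 ≤ A * d ^ (-α) := (mul_pos hA hdα).le
    have hBe : 0 ≤ B * e ^ (-β) := (mul_pos hB heβ).le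
    have e1 : σ₃ * K * l ^ (-α) * (A * d ^ (-α)) ≤ σ₃ * K * l ^ (-γ) * (A * d ^ (-α)) :=
      mul_le_mul_of_nonneg_right (mul_le_mul_of_nonneg_left hlα hσK) hAd
    have e2 : σ₃ * K * l ^ (-β) * (B * e ^ (-β)) ≤ σ₃ * K * l ^ (-γ) * (B * e ^ (-β)) :=
      mul_le_mul_of_nonneg_right (mul_le_mul_of_nonneg_left hlβ hσK) hBe
    have e3 : (1 - l) ^ (-α) * (A * d ^ (-α)) ≤ c₀ * (A * d ^ (-α)) :=
      mul_le_mul_of_nonneg_right h1α hAd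
    have e4 : (1 - l) ^ (-β) * (B * e ^ (-β)) ≤ c₀ * (B * e ^ (-β)) :=
      mul_le_mul_of_nonneg_right h1β hBe
    have key2' := mul_le_mul_of_nonneg_left key2 hσ0
    calc f r₁ τ₁ ≤ σ₃ * f ρ τ + A * ((1 - l) ^ (-α) * d ^ (-α))
          + B * ((1 - l) ^ (-β) * e ^ (-β)) := key1
      _ ≤ σ₃ * (K * (A * (l ^ (-α) * d ^ (-α)) + B * (l ^ (-β) * e ^ (-β))))
          + A * ((1 - l) ^ (-α) * d ^ (-α)) + B * ((1 - l) ^ (-β) * e ^ (-β)) := by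
          linarith
      _ = σ₃ * K * l ^ (-α) * (A * d ^ (-α)) + σ₃ * K * l ^ (-β) * (B * e ^ (-β))
          + (1 - l) ^ (-α) * (A * d ^ (-α)) + (1 - l) ^ (-β) * (B * e ^ (-β)) := by
          ring
      _ ≤ σ₃ * K * l ^ (-γ) * (A * d ^ (-α)) + σ₃ * K * l ^ (-γ) * (B * e ^ (-β))
          + c₀ * (A * d ^ (-α)) + c₀ * (B * e ^ (-β)) := by linarith
      _ = (q * K + c₀) * (A * d ^ (-α) + B * e ^ (-β)) := by rw [hqdef]; ring
  -- iterate
  have hiterBnd : ∀ n : ℕ, Bnd (q ^ n * K₀ + C) := by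
    intro n
    induction n with
    | zero =>
      refine hmono K₀ _ ?_ hbase
      simp only [pow_zero, one_mul]
      linarith
    | succ n ih =>
      have h0 : 0 ≤ q ^ n * K₀ + C := by positivity
      have := hstep _ h0 ih
      have heq : q * (q ^ n * K₀ + C) + c₀ = q ^ (n + 1) * K₀ + C := by
        linear_combination hfix
      rwa [heq] at this
  -- pass to the limit
  intro r₁ r₂ τ₁ τ₂ h1 h2 h3 h4 h5 h6
  set S := A * (r₂ - r₁) ^ (-α) + B * (τ₁ - τ₂) ^ (-β) with hSdef
  have hS : 0 < S := hSpos r₁ r₂ τ₁ τ₂ h2 h5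
  have hseq : ∀ n : ℕ, f r₁ τ₁ ≤ q ^ n * (K₀ * S) + C * S := by
    intro n
    have := hiterBnd n r₁ r₂ τ₁ τ₂ h1 h2 h3 h4 h5 h6
    calc f r₁ τ₁ ≤ (q ^ n * K₀ + C) * S := this
      _ = q ^ n * (K₀ * S) + C * S := by ring
  have hlim : Tendsto (fun n : ℕ => q ^ n * (K₀ * S) + C * S) atTop (nhds (C * S)) := by
    have h0 : Tendsto (fun n : ℕ => q ^ n) atTop (nhds 0) :=
      tendsto_pow_atTop_nhds_zero_of_lt_one hq0 hq1
    have := (h0.mul_const (K₀ * S)).add_const (C * S)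
    simpa using this
  have hfinal : f r₁ τ₁ ≤ C * S := ge_of_tendsto' hlim hseq
  calc f r₁ τ₁ ≤ C * S := hfinal
    _ = C * A * (r₂ - r₁) ^ (-α) + C * B * (τ₁ - τ₂) ^ (-β) := by rw [hSdef]; ring

/-- Two-parameter hole-filling iteration lemma: there is a constant `C`
depending only on `α`, `β`, `σ₃` absorbing the first term of the estimate. -/
theorem two_parameter_iteration
    (α β σ₃ : ℝ) (hα : 0 ≤ α) (hβ : 0 ≤ β) (hσ0 : 0 ≤ σ₃) (hσ1 : σ₃ < 1) :
    ∃ C : ℝ, ∀ (r τ₀ : ℝ) (f : ℝ → ℝ → ℝ) (A B : ℝ),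
      0 < r → 0 < τ₀ → 0 ≤ A → 0 ≤ B →
      (∀ ρ ∈ Set.Icc (0 : ℝ) r, ∀ τ ∈ Set.Icc (0 : ℝ) τ₀, 0 ≤ f ρ τ) →
      (∃ M : ℝ, ∀ ρ ∈ Set.Icc (0 : ℝ) r, ∀ τ ∈ Set.Icc (0 : ℝ) τ₀, f ρ τ ≤ M) →
      (∀ r₁ r₂ τ₁ τ₂ : ℝ, 0 < r₁ → r₁ < r₂ → r₂ < r → 0 < τ₂ → τ₂ < τ₁ → τ₁ < τ₀ →
        f r₁ τ₁ ≤ σ₃ * f r₂ τ₂ + A * (r₂ - r₁) ^ (-α) + B * (τ₁ - τ₂) ^ (-β)) →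
      ∀ r₁ r₂ τ₁ τ₂ : ℝ, 0 < r₁ → r₁ < r₂ → r₂ < r → 0 < τ₂ → τ₂ < τ₁ → τ₁ < τ₀ →
        f r₁ τ₁ ≤ C * A * (r₂ - r₁) ^ (-α) + C * B * (τ₁ - τ₂) ^ (-β) := by
  set γ := max α β with hγdef
  have hγ : 0 ≤ γ := le_trans hα (le_max_left _ _)
  -- choose the scaling factor l
  obtain ⟨l, hl0, hl1, hq1⟩ : ∃ l : ℝ, 0 < l ∧ l < 1 ∧ σ₃ * l ^ (-γ) < 1 := by
    rcases eq_or_lt_of_le hγ with h0 | hpos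
    · refine ⟨1/2, by norm_num, by norm_num, ?_⟩
      rw [← h0]
      simpa using hσ1
    · refine ⟨((σ₃ + 1) / 2) ^ (1/γ), ?_, ?_, ?_⟩
      · exact Real.rpow_pos_of_pos (by linarith) _
      · exact Real.rpow_lt_one (by linarith) (by linarith) (by positivity)
      · have hx0 : (0:ℝ) < (σ₃ + 1) / 2 := by linarith
        rw [← Real.rpow_mul hx0.le]
        have hexp : 1/γ * (-γ) = -1 := by field_simp
        rw [hexp, Real.rpow_neg_one]
        have hyinv : 0 < ((σ₃ + 1) / 2)⁻¹ := by positivity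
        have hlt : σ₃ * ((σ₃ + 1) / 2)⁻¹ < ((σ₃ + 1) / 2) * ((σ₃ + 1) / 2)⁻¹ :=
          mul_lt_mul_of_pos_right (by linarith) hyinv
        rwa [mul_inv_cancel₀ (ne_of_gt hx0)] at hlt
  have hq0 : 0 ≤ σ₃ * l ^ (-γ) := mul_nonneg hσ0 (Real.rpow_nonneg hl0.le _)
  have hc₀pos : 0 < (1 - l) ^ (-γ) := Real.rpow_pos_of_pos (by linarith) _
  obtain ⟨C, hC0, hfix⟩ : ∃ C : ℝ, 0 < C ∧ σ₃ * l ^ (-γ) * C + (1 - l) ^ (-γ) = C := by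
    have h1q : 1 - σ₃ * l ^ (-γ) ≠ 0 := by linarith
    refine ⟨(1 - l) ^ (-γ) / (1 - σ₃ * l ^ (-γ)),
      div_pos hc₀pos (by linarith), ?_⟩
    field_simp
    ring
  refine ⟨C, ?_⟩
  intro r τ₀ f A B hr hτ₀ hA hB _hnn hMex hiter r₁ r₂ τ₁ τ₂ h1 h2 h3 h4 h5 h6
  obtain ⟨M, hM⟩ := hMex
  have key : ∀ ε : ℝ, 0 < ε →
      f r₁ τ₁ ≤ C * (A + ε) * (r₂ - r₁) ^ (-α) + C * (B + ε) * (τ₁ - τ₂) ^ (-β) := by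
    intro ε hε
    refine two_parameter_iteration_aux α β σ₃ hα hβ hσ0 l hl0 hl1 C hC0.le hq0 hq1 hfix
      r τ₀ f (A + ε) (B + ε) hr hτ₀ (by linarith) (by linarith) M hM ?_
      r₁ r₂ τ₁ τ₂ h1 h2 h3 h4 h5 h6
    intro a b c d ha hb hc hd he hf
    have := hiter a b c d ha hb hc hd he hf
    have hεα : 0 ≤ ε * (b - a) ^ (-α) :=
      mul_nonneg hε.le (Real.rpow_nonneg (by linarith) _)
    have hεβ : 0 ≤ ε * (c - d) ^ (-β) :=
      mul_nonneg hε.le (Real.rpow_nonneg (by linarith) _)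
    nlinarith
  refine le_of_forall_pos_le_add ?_
  intro δ hδ
  have hdα : 0 < (r₂ - r₁) ^ (-α) := Real.rpow_pos_of_pos (by linarith) _
  have heβ : 0 < (τ₁ - τ₂) ^ (-β) := Real.rpow_pos_of_pos (by linarith) _
  have hden : 0 < C * ((r₂ - r₁) ^ (-α) + (τ₁ - τ₂) ^ (-β)) := by positivity
  set ε := δ / (C * ((r₂ - r₁) ^ (-α) + (τ₁ - τ₂) ^ (-β))) with hεdef
  have hε : 0 < ε := div_pos hδ hden
  have := key ε hε
  have heq : C * (A + ε) * (r₂ - r₁) ^ (-α) + C * (B + ε) * (τ₁ - τ₂) ^ (-β)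
      = C * A * (r₂ - r₁) ^ (-α) + C * B * (τ₁ - τ₂) ^ (-β) + δ := by
    have : ε * (C * ((r₂ - r₁) ^ (-α) + (τ₁ - τ₂) ^ (-β))) = δ := by
      rw [hεdef]
      field_simp
    nlinarith [this]
  rw [heq] at this
  linarith
end

section
/- Let (X, 𝒜, μ) be a measure space, let B ∈ 𝒜 satisfy 0 < μ(B) < ∞, let a < b be real numbers, let 0 < α < 1, and let E be a measurable subset of B × (a,b) (with respect to the product of μ and one-dimensional Lebesgue measure) such that (μ ⊗ λ)(E) ≤ (1−α)·μ(B)·(b−a). Then there exists a time level t′ ∈ (a, b − (α/2)(b−a)) such that the slice E^{t′} = {x ∈ B : (x,t′) ∈ E} is μ-measurable and satisfies μ(E^{t′}) ≤ ((1−α)/(1−α/2))·μ(B). -/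
open MeasureTheory

/-- Fubini/pigeonhole on space-time cylinders: if `E ⊆ B × (a,b)` occupies at
most the fraction `1-α` of the cylinder, then some time slice in
`(a, b - (α/2)(b-a))` occupies at most the fraction `(1-α)/(1-α/2)` of `B`. -/
theorem good_time_slice
    {X : Type*} [MeasurableSpace X] (μ : MeasureTheory.Measure X)
    (B : Set X) (hB : MeasurableSet B) (hB0 : 0 < μ B) (hBfin : μ B < ⊤)
    (a b α : ℝ) (hab : a < b) (hα0 : 0 < α) (hα1 : α < 1)
    (E : Set (X × ℝ)) (hE : MeasurableSet E) (hEsub : E ⊆ B ×ˢ Set.Ioo a b)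
    (hmeas : (μ.prod MeasureTheory.volume) E ≤
      ENNReal.ofReal (1 - α) * μ B * ENNReal.ofReal (b - a)) :
    ∃ t' ∈ Set.Ioo a (b - (α / 2) * (b - a)),
      MeasurableSet {x | (x, t') ∈ E} ∧
      μ {x ∈ B | (x, t') ∈ E} ≤ ENNReal.ofReal ((1 - α) / (1 - α / 2)) * μ B := by
  classical
  by_contra hcon
  push_neg at hcon
  set ν := μ.restrict B with hν
  have hνfin : IsFiniteMeasure ν := by
    constructor
    rw [hν, Measure.restrict_apply_univ]
    exact hBfin
  set c : ENNReal := ENNReal.ofReal ((1 - α) / (1 - α / 2)) with hc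
  set J := Set.Ioo a (b - α / 2 * (b - a)) with hJ
  have hhalf : (0:ℝ) < 1 - α / 2 := by linarith
  have hslice : ∀ t : ℝ, MeasurableSet {x | (x, t) ∈ E} := fun t =>
    hE.preimage measurable_prodMk_right
  -- the strict lower bound on every slice in J
  have h' : ∀ t ∈ J, c * μ B < ν {x | (x, t) ∈ E} := by
    intro t ht
    have h1 := hcon t ht (hslice t)
    have h2 : {x ∈ B | (x, t) ∈ E} = {x | (x, t) ∈ E} ∩ B := by
      ext x; simp [and_comm]
    rw [hν, Measure.restrict_apply (hslice t), ← h2]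
    exact h1
  -- Fubini bound
  have hprodle : (ν.prod volume) E ≤ (μ.prod volume) E := by
    rw [Measure.prod_apply hE, Measure.prod_apply hE, hν]
    exact lintegral_mono' Measure.restrict_le_self le_rfl
  have hfub : (∫⁻ t in J, ν {x | (x, t) ∈ E}) ≤
      ENNReal.ofReal (1 - α) * μ B * ENNReal.ofReal (b - a) := by
    calc (∫⁻ t in J, ν {x | (x, t) ∈ E})
        ≤ ∫⁻ t, ν {x | (x, t) ∈ E} := lintegral_mono' Measure.restrict_le_self le_rfl
      _ = (ν.prod volume) E := (Measure.prod_apply_symm hE).symm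
      _ ≤ (μ.prod volume) E := hprodle
      _ ≤ _ := hmeas
  -- volume of J
  have hJvol : volume J = ENNReal.ofReal ((1 - α / 2) * (b - a)) := by
    rw [hJ, Real.volume_Ioo]
    congr 1
    ring
  have hJpos : volume J ≠ 0 := by
    rw [hJvol]
    simp only [ne_eq, ENNReal.ofReal_eq_zero, not_le]
    exact mul_pos hhalf (by linarith)
  -- strict inequality via lintegral_strict_mono
  have hgmeas : Measurable fun t : ℝ => ν ((fun x => (x, t)) ⁻¹' E) :=
    measurable_measure_prodMk_right hE
  have hconst : (∫⁻ _ in J, c * μ B) = c * μ B * volume J := by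
    rw [lintegral_const, Measure.restrict_apply_univ]
  have hfin : (∫⁻ _ in J, c * μ B) ≠ ⊤ := by
    rw [hconst, hJvol]
    exact ENNReal.mul_ne_top (ENNReal.mul_ne_top ENNReal.ofReal_ne_top hBfin.ne)
      ENNReal.ofReal_ne_top
  have hae : ∀ᵐ t ∂(volume.restrict J), c * μ B < ν {x | (x, t) ∈ E} := by
    rw [ae_restrict_iff' measurableSet_Ioo]
    exact Filter.Eventually.of_forall h'
  have hstrict : (∫⁻ _ in J, c * μ B) < ∫⁻ t in J, ν {x | (x, t) ∈ E} :=
    lintegral_strict_mono (by simpa [Measure.restrict_eq_zero, measurableSet_Ioo] using hJpos)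
      hgmeas.aemeasurable hfin hae
  -- compute the constant integral
  have hkey : c * μ B * volume J = ENNReal.ofReal (1 - α) * μ B * ENNReal.ofReal (b - a) := by
    rw [hJvol, hc]
    rw [mul_right_comm, mul_right_comm (ENNReal.ofReal (1 - α)) (μ B),
      ← ENNReal.ofReal_mul (div_nonneg (by linarith) (by linarith)),
      ← ENNReal.ofReal_mul (by linarith)]
    congr 2
    rw [div_mul_eq_mul_div, div_eq_iff hhalf.ne']
    ring
  rw [hconst, hkey] at hstrict
  exact absurd hfub (not_le.mpr hstrict)
end

section
/- Let (X,d) be a separable metric space and μ a Borel measure on X such that every open ball has strictly positive measure. Let S ⊆ X, let u : X → ℝ be μ-measurable, and suppose there are constants C > 0, β > 0 and r₀ > 0 such that for every z ∈ S and every 0 < r ≤ r₀ the essential oscillation of u over the ball B(z,r) is finite and satisfies ess osc_{B(z,r)} u ≤ C·r^β, where ess osc_{A} u = ess sup_{A} u − ess inf_{A} u (taken with respect to μ restricted to A). Then there exists a function ũ : S → ℝ such that ũ = u μ-almost everywhere on S, and |ũ(z) − ũ(w)| ≤ 2^β·C·d(z,w)^β for all z, w ∈ S with d(z,w) ≤ r₀/2.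 -/
open MeasureTheory Filter

/-- Points of a level set that have a ball where the level set is null form a null set. -/
private lemma null_level_aux {X : Type*} [MetricSpace X] [TopologicalSpace.SeparableSpace X]
    [MeasurableSpace X] (μ : Measure X) (A : Set X) :
    μ (A ∩ {x | ∃ r, 0 < r ∧ μ (A ∩ Metric.ball x r) = 0}) = 0 := by
  haveI : SecondCountableTopology X := UniformSpace.secondCountable_of_separable X
  set 𝒮 : Set (Set X) := {b | ∃ x r, 0 < r ∧ μ (A ∩ Metric.ball x r) = 0 ∧ b = Metric.ball x r}
    with h𝒮
  have hopen : ∀ b ∈ 𝒮, IsOpen b := by rintro b ⟨x, r, -, -, rfl⟩; exact Metric.isOpen_ball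
  obtain ⟨T, hTc, hTS, hT⟩ := TopologicalSpace.isOpen_sUnion_countable 𝒮 hopen
  have hD : {x | ∃ r, 0 < r ∧ μ (A ∩ Metric.ball x r) = 0} ⊆ ⋃₀ T := by
    rw [hT]
    rintro x ⟨r, hr, hμ⟩
    exact ⟨Metric.ball x r, ⟨x, r, hr, hμ, rfl⟩, Metric.mem_ball_self hr⟩
  have hsub : A ∩ {x | ∃ r, 0 < r ∧ μ (A ∩ Metric.ball x r) = 0} ⊆ ⋃ b ∈ T, A ∩ b := by
    rintro x ⟨hxA, hxD⟩
    obtain ⟨b, hb, hxb⟩ := hD hxD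
    exact Set.mem_biUnion hb ⟨hxA, hxb⟩
  refine measure_mono_null hsub ?_
  rw [measure_biUnion_null_iff hTc]
  rintro b hb
  obtain ⟨x, r, hr, hμ, rfl⟩ := hTS hb
  exact hμ

/-- A.e. point is "essentially interior" to all of its superlevel and sublevel sets
at rational levels. -/
private lemma ae_level {X : Type*} [MetricSpace X] [TopologicalSpace.SeparableSpace X]
    [MeasurableSpace X] (μ : Measure X) (u : X → ℝ) :
    ∀ᵐ x ∂μ, ∀ q : ℚ,
      ((q : ℝ) < u x → ∀ r, 0 < r → μ ({y | (q : ℝ) < u y} ∩ Metric.ball x r) ≠ 0) ∧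
      (u x < (q : ℝ) → ∀ r, 0 < r → μ ({y | u y < (q : ℝ)} ∩ Metric.ball x r) ≠ 0) := by
  rw [ae_all_iff]
  intro q
  have h1 : ∀ᵐ x ∂μ,
      ((q : ℝ) < u x → ∀ r, 0 < r → μ ({y | (q : ℝ) < u y} ∩ Metric.ball x r) ≠ 0) := by
    rw [ae_iff]
    refine measure_mono_null ?_ (null_level_aux μ {y | (q : ℝ) < u y})
    intro x hx
    simp only [Set.mem_setOf_eq] at hx ⊢
    push_neg at hx
    obtain ⟨hxq, r, hr, hμ⟩ := hx
    exact ⟨hxq, r, hr, hμ⟩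
  have h2 : ∀ᵐ x ∂μ,
      (u x < (q : ℝ) → ∀ r, 0 < r → μ ({y | u y < (q : ℝ)} ∩ Metric.ball x r) ≠ 0) := by
    rw [ae_iff]
    refine measure_mono_null ?_ (null_level_aux μ {y | u y < (q : ℝ)})
    intro x hx
    simp only [Set.mem_setOf_eq] at hx ⊢
    push_neg at hx
    obtain ⟨hxq, r, hr, hμ⟩ := hx
    exact ⟨hxq, r, hr, hμ⟩
  exact h1.and h2

private noncomputable def ESup {X : Type*} [MetricSpace X] [MeasurableSpace X]
    (μ : Measure X) (u : X → ℝ) (z : X) (r : ℝ) : ℝ :=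
  essSup u (μ.restrict (Metric.ball z r))

private noncomputable def EInf {X : Type*} [MetricSpace X] [MeasurableSpace X]
    (μ : Measure X) (u : X → ℝ) (z : X) (r : ℝ) : ℝ :=
  essInf u (μ.restrict (Metric.ball z r))

open Classical in
private noncomputable def vrep {X : Type*} [MetricSpace X] [MeasurableSpace X]
    (μ : Measure X) (u : X → ℝ) (S : Set X) (r₀ : ℝ) : X → ℝ :=
  fun x => if x ∈ S then sInf (ESup μ u x '' Set.Ioc 0 r₀) else u x

/-- Power decay of the essential oscillation on balls centered in `S` yields a
representative of `u` that is Hölder continuous on `S` with constant `2^β C`. -/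
theorem holder_representative_from_oscillation_decay
    {X : Type*} [MetricSpace X] [TopologicalSpace.SeparableSpace X]
    [MeasurableSpace X] [BorelSpace X]
    (μ : Measure X)
    (hball : ∀ (x : X) (r : ℝ), 0 < r → 0 < μ (Metric.ball x r))
    (S : Set X) (u : X → ℝ) (hu : Measurable u)
    (C β r₀ : ℝ) (hC : 0 < C) (hβ : 0 < β) (hr₀ : 0 < r₀)
    (hbdd : ∀ z ∈ S, ∀ r : ℝ, 0 < r → r ≤ r₀ →
      ∃ m M : ℝ, ∀ᵐ x ∂(μ.restrict (Metric.ball z r)), u x ∈ Set.Icc m M)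
    (hosc : ∀ z ∈ S, ∀ r : ℝ, 0 < r → r ≤ r₀ →
      essSup u (μ.restrict (Metric.ball z r)) -
        essInf u (μ.restrict (Metric.ball z r)) ≤ C * r ^ β) :
    ∃ v : X → ℝ, (∀ᵐ x ∂(μ.restrict S), v x = u x) ∧
      ∀ z ∈ S, ∀ w ∈ S, dist z w ≤ r₀ / 2 →
        |v z - v w| ≤ 2 ^ β * C * dist z w ^ β := by
  classical
  -- basic facts about the filters
  have hne : ∀ (z : X) (r : ℝ), 0 < r → (ae (μ.restrict (Metric.ball z r))).NeBot := by
    intro z r hr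
    refine ae_neBot.2 ?_
    intro h0
    have h1 := hball z r hr
    rw [← Measure.restrict_apply_univ (Metric.ball z r), h0] at h1
    simp at h1
  have hbu : ∀ z ∈ S, ∀ r : ℝ, 0 < r → r ≤ r₀ →
      IsBoundedUnder (· ≤ ·) (ae (μ.restrict (Metric.ball z r))) u := by
    intro z hz r h1 h2
    obtain ⟨m, M, hmM⟩ := hbdd z hz r h1 h2
    exact ⟨M, Filter.eventually_map.2 (hmM.mono fun x hx => hx.2)⟩
  have hbl : ∀ z ∈ S, ∀ r : ℝ, 0 < r → r ≤ r₀ →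
      IsBoundedUnder (· ≥ ·) (ae (μ.restrict (Metric.ball z r))) u := by
    intro z hz r h1 h2
    obtain ⟨m, M, hmM⟩ := hbdd z hz r h1 h2
    exact ⟨m, Filter.eventually_map.2 (hmM.mono fun x hx => hx.1)⟩
  -- monotonicity of essential sup/inf in the ball
  have hES_mono : ∀ z ∈ S, ∀ w ∈ S, ∀ r s : ℝ, 0 < r → r ≤ r₀ → 0 < s → s ≤ r₀ →
      Metric.ball z r ⊆ Metric.ball w s → ESup μ u z r ≤ ESup μ u w s := by
    intro z hz w hw r s hr hrr hs hss hsub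
    haveI := hne z r hr
    exact limsup_le_limsup_of_le (ae_mono (Measure.restrict_mono hsub le_rfl))
      ((hbl z hz r hr hrr).isCoboundedUnder_le) (hbu w hw s hs hss)
  have hEI_mono : ∀ z ∈ S, ∀ w ∈ S, ∀ r s : ℝ, 0 < r → r ≤ r₀ → 0 < s → s ≤ r₀ →
      Metric.ball z r ⊆ Metric.ball w s → EInf μ u w s ≤ EInf μ u z r := by
    intro z hz w hw r s hr hrr hs hss hsub
    haveI := hne z r hr
    exact liminf_le_liminf_of_le (ae_mono (Measure.restrict_mono hsub le_rfl))
      (hbl w hw s hs hss) ((hbu z hz r hr hrr).isCoboundedUnder_ge)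
  have hle : ∀ z ∈ S, ∀ r : ℝ, 0 < r → r ≤ r₀ → EInf μ u z r ≤ ESup μ u z r := by
    intro z hz r h1 h2
    haveI := hne z r h1
    exact liminf_le_limsup (hbu z hz r h1 h2) (hbl z hz r h1 h2)
  have hosc' : ∀ z ∈ S, ∀ r : ℝ, 0 < r → r ≤ r₀ →
      ESup μ u z r - EInf μ u z r ≤ C * r ^ β := hosc
  -- the candidate representative
  have hne_img : ∀ z : X, (ESup μ u z '' Set.Ioc 0 r₀).Nonempty :=
    fun z => ⟨ESup μ u z r₀, ⟨r₀, ⟨hr₀, le_rfl⟩, rfl⟩⟩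
  have hbddB : ∀ z ∈ S, BddBelow (ESup μ u z '' Set.Ioc 0 r₀) := by
    intro z hz
    refine ⟨EInf μ u z r₀, ?_⟩
    rintro _ ⟨r, hr, rfl⟩
    exact le_trans
      (hEI_mono z hz z hz r r₀ hr.1 hr.2 hr₀ le_rfl (Metric.ball_subset_ball hr.2))
      (hle z hz r hr.1 hr.2)
  have hvz : ∀ z ∈ S, vrep μ u S r₀ z = sInf (ESup μ u z '' Set.Ioc 0 r₀) := by
    intro z hz
    simp only [vrep, if_pos hz]
  have hv_le : ∀ z ∈ S, ∀ r : ℝ, 0 < r → r ≤ r₀ → vrep μ u S r₀ z ≤ ESup μ u z r := by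
    intro z hz r h1 h2
    rw [hvz z hz]
    exact csInf_le (hbddB z hz) ⟨r, ⟨h1, h2⟩, rfl⟩
  have hv_ge : ∀ z ∈ S, ∀ s : ℝ, 0 < s → s ≤ r₀ → EInf μ u z s ≤ vrep μ u S r₀ z := by
    intro z hz s hs hss
    rw [hvz z hz]
    refine le_csInf (hne_img z) ?_
    rintro _ ⟨r, hr, rfl⟩
    rcases le_total r s with h | h
    · exact le_trans
        (hEI_mono z hz z hz r s hr.1 hr.2 hs hss (Metric.ball_subset_ball h))
        (hle z hz r hr.1 hr.2)
    · exact le_trans (hle z hz s hs hss)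
        (hES_mono z hz z hz s r hs hss hr.1 hr.2 (Metric.ball_subset_ball h))
  refine ⟨vrep μ u S r₀, ?_, ?_⟩
  · -- a.e. equality
    refine ae_restrict_of_ae ?_
    filter_upwards [ae_level μ u] with x hx
    by_cases hxS : x ∈ S
    · -- `u x` lies between essential inf and essential sup on every small ball
      have hu_le : ∀ r : ℝ, 0 < r → r ≤ r₀ → u x ≤ ESup μ u x r := by
        intro r hr hrr
        by_contra hlt
        push_neg at hlt
        obtain ⟨q, hq1, hq2⟩ := exists_rat_btwn hlt
        haveI := hne x r hr
        have hq1' : Filter.limsup u (ae (μ.restrict (Metric.ball x r))) < (q : ℝ) := hq1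
        have hev : ∀ᵐ y ∂(μ.restrict (Metric.ball x r)), u y < (q : ℝ) :=
          eventually_lt_of_limsup_lt hq1' (hbu x hxS r hr hrr)
        have hms : MeasurableSet {y | (q : ℝ) ≤ u y} := measurableSet_le measurable_const hu
        have h0' : μ.restrict (Metric.ball x r) {y | (q : ℝ) ≤ u y} = 0 := by
          have := ae_iff.mp hev
          simpa [not_lt] using this
        rw [Measure.restrict_apply hms] at h0'
        have h0 : μ ({y | (q : ℝ) < u y} ∩ Metric.ball x r) = 0 := by
          refine measure_mono_null ?_ h0'
          exact Set.inter_subset_inter_left _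
            (Set.setOf_subset_setOf.mpr fun y hy => le_of_lt hy)
        exact (hx q).1 hq2 r hr h0
      have hu_ge : ∀ r : ℝ, 0 < r → r ≤ r₀ → EInf μ u x r ≤ u x := by
        intro r hr hrr
        by_contra hlt
        push_neg at hlt
        obtain ⟨q, hq1, hq2⟩ := exists_rat_btwn hlt
        haveI := hne x r hr
        have hq2' : (q : ℝ) < Filter.liminf u (ae (μ.restrict (Metric.ball x r))) := hq2
        have hev : ∀ᵐ y ∂(μ.restrict (Metric.ball x r)), (q : ℝ) < u y :=
          eventually_lt_of_lt_liminf hq2' (hbl x hxS r hr hrr)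
        have hms : MeasurableSet {y | u y ≤ (q : ℝ)} := measurableSet_le hu measurable_const
        have h0' : μ.restrict (Metric.ball x r) {y | u y ≤ (q : ℝ)} = 0 := by
          have := ae_iff.mp hev
          simpa [not_lt] using this
        rw [Measure.restrict_apply hms] at h0'
        have h0 : μ ({y | u y < (q : ℝ)} ∩ Metric.ball x r) = 0 := by
          refine measure_mono_null ?_ h0'
          exact Set.inter_subset_inter_left _
            (Set.setOf_subset_setOf.mpr fun y hy => le_of_lt hy)
        exact (hx q).2 hq1 r hr h0
      -- conclude `v x = u x`
      have h1 : u x ≤ vrep μ u S r₀ x := by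
        rw [hvz x hxS]
        refine le_csInf (hne_img x) ?_
        rintro _ ⟨r, hr, rfl⟩
        exact hu_le r hr.1 hr.2
      have h2 : vrep μ u S r₀ x ≤ u x := by
        by_contra hlt
        push_neg at hlt
        set ε : ℝ := vrep μ u S r₀ x - u x with hε
        have hεpos : 0 < ε := by simp only [hε]; linarith
        set r : ℝ := min r₀ ((ε / (2 * C)) ^ β⁻¹) with hrdef
        have hr0 : 0 < r :=
          lt_min hr₀ (Real.rpow_pos_of_pos (div_pos hεpos (by linarith)) _)
        have hrr : r ≤ r₀ := min_le_left _ _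
        have hrb : r ^ β ≤ ε / (2 * C) := by
          calc r ^ β ≤ ((ε / (2 * C)) ^ β⁻¹) ^ β :=
                Real.rpow_le_rpow hr0.le (min_le_right _ _) hβ.le
            _ = ε / (2 * C) :=
                Real.rpow_inv_rpow (div_pos hεpos (by linarith)).le hβ.ne'
        have hCr : C * r ^ β ≤ ε / 2 := by
          have h := mul_le_mul_of_nonneg_left hrb hC.le
          have : C * (ε / (2 * C)) = ε / 2 := by field_simp
          linarith
        have a1 : vrep μ u S r₀ x ≤ ESup μ u x r := hv_le x hxS r hr0 hrr
        have a2 := hosc' x hxS r hr0 hrr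
        have a3 := hu_ge r hr0 hrr
        have : vrep μ u S r₀ x ≤ u x + ε / 2 := by linarith
        simp only [hε] at this
        linarith
      exact le_antisymm h2 h1
    · simp only [vrep, if_neg hxS]
  · -- Hölder continuity on S
    intro z hz w hw hd
    rcases eq_or_lt_of_le (dist_nonneg : (0 : ℝ) ≤ dist z w) with h0 | hdist
    · have hzw : z = w := dist_eq_zero.mp h0.symm
      subst hzw
      simp [dist_self, Real.zero_rpow hβ.ne']
    · set d : ℝ := dist z w with hddef
      have hd2 : 0 < 2 * d := by linarith
      have h2d : 2 * d ≤ r₀ := by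
        have : d ≤ r₀ / 2 := hd
        linarith
      have hdle : d ≤ r₀ := by linarith
      have hzw : Metric.ball z d ⊆ Metric.ball w (2 * d) := by
        intro y hy
        rw [Metric.mem_ball] at hy ⊢
        have ht := dist_triangle y z w
        have : dist z w = d := rfl
        linarith
      have hwz : Metric.ball w d ⊆ Metric.ball z (2 * d) := by
        intro y hy
        rw [Metric.mem_ball] at hy ⊢
        have ht := dist_triangle y w z
        have hsymm : dist w z = d := by rw [dist_comm]
        linarith
      have key1 : vrep μ u S r₀ z - vrep μ u S r₀ w ≤ C * (2 * d) ^ β := by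
        have a1 : vrep μ u S r₀ z ≤ ESup μ u z d := hv_le z hz d hdist hdle
        have a2 : ESup μ u z d ≤ ESup μ u w (2 * d) :=
          hES_mono z hz w hw d (2 * d) hdist hdle hd2 h2d hzw
        have a3 : EInf μ u w (2 * d) ≤ vrep μ u S r₀ w := hv_ge w hw (2 * d) hd2 h2d
        have a4 := hosc' w hw (2 * d) hd2 h2d
        linarith
      have key2 : vrep μ u S r₀ w - vrep μ u S r₀ z ≤ C * (2 * d) ^ β := by
        have a1 : vrep μ u S r₀ w ≤ ESup μ u w d := by
          refine hv_le w hw d ?_ hdle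
          rw [hddef, dist_comm] at hdist ⊢
          exact hdist
        have a2 : ESup μ u w d ≤ ESup μ u z (2 * d) :=
          hES_mono w hw z hz d (2 * d) hdist hdle hd2 h2d hwz
        have a3 : EInf μ u z (2 * d) ≤ vrep μ u S r₀ z := hv_ge z hz (2 * d) hd2 h2d
        have a4 := hosc' z hz (2 * d) hd2 h2d
        linarith
      have hrw : C * (2 * d) ^ β = 2 ^ β * C * d ^ β := by
        rw [Real.mul_rpow (by norm_num : (0:ℝ) ≤ 2) dist_nonneg]
        ring
      rw [abs_sub_le_iff]
      constructor <;> [skip; skip] <;> rw [← hrw] <;> [exact key1; exact key2]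
end
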